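/- arXiv:1011.6057 — 6 statements merged into one kernel-verified Lean document; each statement's English description precedes it below -/
import Mathlib

section
/- Two real quadratic forms A and B on ℂ^d (equivalently complex symmetric d×d matrices), where A is invertible and the matrix A⁻¹B has d distinct eigenvalues, can be simultaneously diagonalized: there exists an invertible complex matrix U such that U A Uᵀ and U B Uᵀ are both diagonal. -/
/-!
Take for the rows of `U` eigenvectors of `M = A⁻¹ B`; they are linearly independent because the
eigenvalues `μ i` are distinct. Then `M Uᵀ = Uᵀ D` with `D = diagonal μ`, so
`U B Uᵀ = U A M Uᵀ = S D` where `S = U A Uᵀ`. Both `S` and `S D` are symmetric, hence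
`S D = (S D)ᵀ = D S`, and a matrix commuting with a diagonal matrix with distinct entries is
diagonal.
-/

open Polynomial

namespace Matrix

variable {n R K : Type*} [Fintype n] [DecidableEq n]

theorem isDiag_of_commute_diagonal [CommRing R] [NoZeroDivisors R] {S : Matrix n n R}
    {μ : n → R} (hμ : Function.Injective μ) (h : Commute S (diagonal μ)) : S.IsDiag := by
  intro i j hij
  have hSij : S i j * (μ j - μ i) = 0 := by
    have hcomm := congr_fun₂ h.eq i j
    rw [mul_diagonal, diagonal_mul] at hcomm
    linear_combination hcomm
  exact (mul_eq_zero.1 hSij).resolve_right (sub_ne_zero.2 (hμ.ne hij).symm)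

theorem mul_transpose_eq_transpose_mul_diagonal [CommSemiring R] {M U : Matrix n n R}
    {μ : n → R} (h : ∀ i, M *ᵥ U i = μ i • U i) : M * Uᵀ = Uᵀ * diagonal μ := by
  ext k i
  rw [mul_diagonal]
  simpa [mul_apply, mulVec, dotProduct, mul_comm] using congr_fun (h i) k

theorem exists_isUnit_det_mulVec_row_eq_smul [Field K] {M : Matrix n n K} {μ : n → K}
    (hμ : Function.Injective μ) (hchar : M.charpoly = ∏ i, (X - C (μ i))) :
    ∃ U : Matrix n n K, IsUnit U.det ∧ ∀ i, M *ᵥ U i = μ i • U i := by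
  have hev : ∀ i, Module.End.HasEigenvalue M.mulVecLin (μ i) := fun i => by
    rw [Module.End.hasEigenvalue_iff_isRoot_charpoly, charpoly_mulVecLin, hchar,
      isRoot_prod]
    exact ⟨i, Finset.mem_univ i, root_X_sub_C.2 rfl⟩
  choose U hU using fun i => (hev i).exists_hasEigenvector
  refine ⟨of U, ?_, fun i => (hU i).apply_eq_smul⟩
  rw [← isUnit_iff_isUnit_det, ← linearIndependent_rows_iff_isUnit]
  exact Module.End.eigenvectors_linearIndependent' _ μ hμ U hU

theorem isDiag_congr_of_mul_transpose_eq_transpose_mul_diagonal [CommRing R] [NoZeroDivisors R]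
    {A B M U : Matrix n n R} {μ : n → R} (hμ : Function.Injective μ) (hA : Aᵀ = A)
    (hB : Bᵀ = B) (hAM : A * M = B) (hU : M * Uᵀ = Uᵀ * diagonal μ) :
    (U * A * Uᵀ).IsDiag ∧ (U * B * Uᵀ).IsDiag := by
  set S := U * A * Uᵀ
  have hBS : U * B * Uᵀ = S * diagonal μ := by
    simp only [S, ← hAM, Matrix.mul_assoc, hU]
  have hS : Sᵀ = S := by simp only [S, transpose_mul, transpose_transpose, hA, Matrix.mul_assoc]
  have hSD : Commute S (diagonal μ) := by
    have hsymm : (U * B * Uᵀ)ᵀ = U * B * Uᵀ := by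
      simp only [transpose_mul, transpose_transpose, hB, Matrix.mul_assoc]
    rw [hBS, transpose_mul, diagonal_transpose, hS] at hsymm
    exact hsymm.symm
  have hSdiag := isDiag_of_commute_diagonal hμ hSD
  refine ⟨hSdiag, fun i j hij => ?_⟩
  change (U * B * Uᵀ) i j = 0
  rw [hBS, mul_diagonal, hSdiag hij, zero_mul]

end Matrix

open Matrix in
theorem stmt_2 (d : ℕ) (A B : Matrix (Fin d) (Fin d) ℂ)
    (hA : Aᵀ = A) (hB : Bᵀ = B) (hAinv : IsUnit A.det)
    (μ : Fin d → ℂ) (hμ : Function.Injective μ)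
    (hchar : (A⁻¹ * B).charpoly = ∏ i : Fin d, (Polynomial.X - Polynomial.C (μ i))) :
    ∃ U : Matrix (Fin d) (Fin d) ℂ, IsUnit U.det ∧
      (U * A * Uᵀ).IsDiag ∧ (U * B * Uᵀ).IsDiag := by
  obtain ⟨U, hUdet, hU⟩ := exists_isUnit_det_mulVec_row_eq_smul hμ hchar
  exact ⟨U, hUdet, isDiag_congr_of_mul_transpose_eq_transpose_mul_diagonal hμ hA hB
    (mul_nonsing_inv_cancel_left A B hAinv) (mul_transpose_eq_transpose_mul_diagonal hU)⟩
end

section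
/- Let f(x,y,z) = det(Ax + By + Cz) where A = Id_d, B = diag(β₁,…,β_d) with distinct β_i, and C = (c_{ij}) is a complex symmetric d×d matrix. Then for each i, the diagonal entry satisfies c_{ii} = β_i · (∂f/∂z)(−β_i, 1, 0) / (∂f/∂y)(−β_i, 1, 0), provided (∂f/∂y)(−β_i,1,0) ≠ 0. -/
/-!
By Jacobi's formula `∂ₖ det M = tr (adj M · ∂ₖ M)`. At `p = (-βᵢ, 1, 0)` the matrix `M(p)` is
`diag (βₐ - βᵢ)`, whose `i`-th diagonal entry vanishes, so its adjugate is concentrated in the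
entry `(i, i)`, with value `P = ∏_{l ≠ i} (β_l - βᵢ)`. Hence `∂ₖ f (p) = P · ∂ₖ Mᵢᵢ (p)`, which is
`P βᵢ` for `k = y` and `P cᵢᵢ` for `k = z`.
-/

open Matrix Finset

namespace Derivation

variable {R A : Type*} [CommSemiring R]

theorem leibniz_prod {M : Type*} [CommSemiring A] [AddCommMonoid M] [Algebra R A] [Module A M]
    [Module R M]
    (D : Derivation R A M) {ι : Type*} [DecidableEq ι] (s : Finset ι) (g : ι → A) :
    D (∏ j ∈ s, g j) = ∑ j ∈ s, (∏ l ∈ s.erase j, g l) • D (g j) := by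
  induction s using Finset.induction_on with
  | empty => simp
  | insert a s ha ih =>
    rw [prod_insert ha, leibniz, ih, sum_insert ha, erase_insert ha, smul_sum, add_comm]
    congr 1
    refine sum_congr rfl fun j hj => ?_
    rw [erase_insert_of_ne (ne_of_mem_of_not_mem hj ha).symm,
      prod_insert fun h => ha (mem_of_mem_erase h), mul_smul]

variable [CommRing A] [Algebra R A] {n : Type*} [Fintype n] [DecidableEq n]

theorem map_det_eq_sum_det_updateCol (D : Derivation R A A) (M : Matrix n n A) :
    D M.det = ∑ j, (M.updateCol j fun a => D (M a j)).det := by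
  simp only [det_apply, map_sum, Units.smul_def, map_zsmul, leibniz_prod, smul_eq_mul]
  rw [sum_comm]
  refine sum_congr rfl fun σ _ => ?_
  rw [smul_sum]
  refine sum_congr rfl fun j _ => ?_
  rw [← mul_prod_erase _ _ (mem_univ j), updateCol_self, mul_comm]
  congr 2
  refine prod_congr rfl fun l hl => ?_
  rw [updateCol_ne (ne_of_mem_erase hl)]

theorem map_det_eq_trace_adjugate_mul (D : Derivation R A A) (M : Matrix n n A) :
    D M.det = trace (adjugate M * M.map D) := by
  simp only [map_det_eq_sum_det_updateCol, ← cramer_apply, cramer_eq_adjugate_mulVec, trace,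
    Matrix.diag, mul_apply, mulVec, dotProduct, map_apply]

end Derivation

theorem Matrix.trace_adjugate_diagonal_mul {R n : Type*} [CommRing R] [Fintype n] [DecidableEq n]
    {δ : n → R} {i : n} (hδ : δ i = 0) (N : Matrix n n R) :
    trace (adjugate (diagonal δ) * N) = (∏ l ∈ univ.erase i, δ l) * N i i := by
  rw [adjugate_diagonal, trace, sum_eq_single i]
  · simp
  · intro a _ ha
    simp [prod_eq_zero (mem_erase.2 ⟨Ne.symm ha, mem_univ i⟩) hδ]
  · simp

theorem Derivation.map_det_of_map_eq_diagonal {R A B n : Type*} [CommSemiring R] [CommRing A]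
    [Algebra R A] [CommRing B] [Fintype n] [DecidableEq n] (D : Derivation R A A) (φ : A →+* B)
    {M : Matrix n n A} {δ : n → B} (hM : M.map φ = diagonal δ) {i : n} (hδ : δ i = 0) :
    φ (D M.det) = (∏ l ∈ univ.erase i, δ l) * φ (D (M i i)) := by
  rw [map_det_eq_trace_adjugate_mul, AddMonoidHom.map_trace, Matrix.map_mul,
    ← RingHom.mapMatrix_apply, RingHom.map_adjugate, RingHom.mapMatrix_apply, hM,
    trace_adjugate_diagonal_mul hδ, map_apply, map_apply]

open Matrix MvPolynomial in
theorem stmt_3_general (d : ℕ) (β : Fin d → ℂ)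
    (Cm : Matrix (Fin d) (Fin d) ℂ)
    (f : MvPolynomial (Fin 3) ℂ)
    (hf : f = Matrix.det (Matrix.of fun i j : Fin d =>
      (if i = j then X 0 + MvPolynomial.C (β i) * X 1 else 0) + MvPolynomial.C (Cm i j) * X 2))
    (i : Fin d)
    (hden : eval ![-β i, 1, 0] (pderiv (1 : Fin 3) f) ≠ 0) :
    Cm i i = β i * eval ![-β i, 1, 0] (pderiv (2 : Fin 3) f)
      / eval ![-β i, 1, 0] (pderiv (1 : Fin 3) f) := by
  set M : Matrix (Fin d) (Fin d) (MvPolynomial (Fin 3) ℂ) := Matrix.of fun i j =>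
    (if i = j then X 0 + MvPolynomial.C (β i) * X 1 else 0) + MvPolynomial.C (Cm i j) * X 2
  have hM : M.map (eval ![-β i, 1, 0]) = diagonal fun a => β a - β i := by
    ext a b
    rcases eq_or_ne a b with rfl | hab
    · simp [M, neg_add_eq_sub]
    · simp [M, hab]
  have hderiv (k : Fin 3) : eval ![-β i, 1, 0] (pderiv k f) =
      (∏ l ∈ univ.erase i, (β l - β i)) * eval ![-β i, 1, 0] (pderiv k (M i i)) := by
    rw [hf, (pderiv k).map_det_of_map_eq_diagonal _ hM (sub_self (β i))]
  have hy : eval ![-β i, 1, 0] (pderiv 1 (M i i)) = β i := by simp [M, pderiv_X]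
  have hz : eval ![-β i, 1, 0] (pderiv 2 (M i i)) = Cm i i := by simp [M, pderiv_X]
  rw [hderiv, hy] at hden
  rw [hderiv, hderiv, hy, hz, eq_div_iff hden]
  ring

open Matrix MvPolynomial in
theorem stmt_3 (d : ℕ) (β : Fin d → ℂ) (hβ : Function.Injective β)
    (Cm : Matrix (Fin d) (Fin d) ℂ) (hCm : Cmᵀ = Cm)
    (f : MvPolynomial (Fin 3) ℂ)
    (hf : f = Matrix.det (Matrix.of fun i j : Fin d =>
      (if i = j then X 0 + MvPolynomial.C (β i) * X 1 else 0) + MvPolynomial.C (Cm i j) * X 2))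
    (i : Fin d)
    (hden : eval ![-β i, 1, 0] (pderiv (1 : Fin 3) f) ≠ 0) :
    Cm i i = β i * eval ![-β i, 1, 0] (pderiv (2 : Fin 3) f)
      / eval ![-β i, 1, 0] (pderiv (1 : Fin 3) f) :=
  stmt_3_general d β Cm f hf i hden
end

section
/- Let f(x,y,z) = 93081x⁴ + 53516x³y − 73684x²y² − 31504xy³ + 9216y⁴ − 369150x²z² − 159700xyz² + 57600y²z² + 90000z⁴, and let M be the symmetric matrix [[50x, −25x, −26x−34y−25z, 9x+6y+15z],[−25x, 25x, 27x+18y−20z, −9x−6y],[−26x−34y−25z, 27x+18y−20z, 108x+72y, −18x−12y],[9x+6y+15z, −9x−6y, −18x−12y, 6x+4y]]. Then det M = f(x,y,z), and M evaluated at (x,y,z) = (1,0,0) is positive definite. -/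
/-!
The determinant identity is a cofactor expansion. Positive definiteness of `M(1,0,0)` follows
from its `LDLᵀ` factorization: symmetric Gaussian elimination has the positive pivots
`50, 25/2, 394/5, 93081/49250` (their product is `det M(1,0,0) = f(1,0,0) = 93081`), and a
congruence by a unitriangular matrix preserves positive definiteness.
-/

open Matrix

theorem Matrix.PosDef.conjTranspose_mul_diagonal_mul_of_unitriangular
    {R n : Type*} [CommRing R] [PartialOrder R] [StarRing R] [StarOrderedRing R]
    [NoZeroDivisors R] [Fintype n] [LinearOrder n]
    {U : Matrix n n R} (hU : U.BlockTriangular id) (hU_diag : ∀ i, U i i = 1)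
    {d : n → R} (hd : ∀ i, 0 < d i) :
    (Uᴴ * diagonal d * U).PosDef := by
  have hdet : U.det = 1 := by
    simp [det_of_isUpperTriangular hU, hU_diag]
  have hUnit : IsUnit U := (isUnit_iff_isUnit_det U).mpr (hdet ▸ isUnit_one)
  exact (IsUnit.posDef_star_left_conjugate_iff hUnit).mpr (.diagonal hd)

theorem stmt_15 :
    (∀ x y z : ℝ,
      (!![50*x, -25*x, -26*x - 34*y - 25*z, 9*x + 6*y + 15*z;
          -25*x, 25*x, 27*x + 18*y - 20*z, -9*x - 6*y;
          -26*x - 34*y - 25*z, 27*x + 18*y - 20*z, 108*x + 72*y, -18*x - 12*y;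
          9*x + 6*y + 15*z, -9*x - 6*y, -18*x - 12*y, 6*x + 4*y]).det
        = 93081*x^4 + 53516*x^3*y - 73684*x^2*y^2 - 31504*x*y^3 + 9216*y^4
          - 369150*x^2*z^2 - 159700*x*y*z^2 + 57600*y^2*z^2 + 90000*z^4) ∧
    Matrix.PosDef (!![(50:ℝ), -25, -26, 9;
                      -25, 25, 27, -9;
                      -26, 27, 108, -18;
                      9, -9, -18, 6]) := by
  refine ⟨fun x y z => ?_, ?_⟩
  · simp [det_succ_row_zero, Fin.sum_univ_succ, Fin.succAbove]
    ring
  · let U : Matrix (Fin 4) (Fin 4) ℝ :=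
      !![1, -1/2, -13/25, 9/50; 0, 1, 28/25, -9/25; 0, 0, 1, -207/1970; 0, 0, 0, 1]
    let d : Fin 4 → ℝ := ![50, 25/2, 394/5, 93081/49250]
    have hU : U.BlockTriangular id := by
      intro i j hij
      fin_cases i <;> fin_cases j <;> simp_all [U]
    have hU_diag : ∀ i, U i i = 1 := by
      intro i
      fin_cases i <;> simp [U]
    have hd : ∀ i, 0 < d i := by
      intro i
      fin_cases i <;> norm_num [d]
    have hLDL : !![(50:ℝ), -25, -26, 9; -25, 25, 27, -9; -26, 27, 108, -18; 9, -9, -18, 6]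
        = Uᴴ * diagonal d * U := by
      ext i j
      fin_cases i <;> fin_cases j <;> simp [U, d, mul_apply, Fin.sum_univ_four] <;> norm_num
    rw [hLDL]
    exact .conjTranspose_mul_diagonal_mul_of_unitriangular hU hU_diag hd
end

section
/- Let M₁₄₆₈ = [[25x, 0, −32x+12y, −60z],[0, 25x, 10z, 24x+16y],[−32x+12y, 10z, 6x+4y, 0],[−60z, 24x+16y, 0, 6x+4y]]. Then det(M₁₄₆₈) = 4·(93081x⁴ + 53516x³y − 73684x²y² − 31504xy³ + 9216y⁴ − 369150x²z² − 159700xyz² + 57600y²z² + 90000z⁴), and for no real (x,y,z) is M₁₄₆₈(x,y,z) positive definite or negative definite. -/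
/-!
Restricting a positive definite matrix to the coordinate planes `{e₀, e₂}` and `{e₁, e₃}` gives
positive definite `2 × 2` matrices, so `(12y - 32x)² < 25x (6x + 4y)` and
`(24x + 16y)² < 25x (6x + 4y)`. Adding the two inequalities yields
`100 (13x² - 2xy + 4y²) < 0`, which is impossible. The same minors occur in `-M`, so `-M` is not
positive definite either.
-/

theorem Matrix.PosDef.sq_lt_mul_diag {n : Type*} [Fintype n] {M : Matrix n n ℝ}
    (hM : M.PosDef) {i j : n} (hij : i ≠ j) : M i j ^ 2 < M i i * M j j := by
  have hdet := (hM.submatrix (e := ![i, j]) fun a b ↦ by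
    fin_cases a <;> fin_cases b <;> simp [hij, hij.symm]).det_pos
  have hsymm : M j i = M i j := by simpa using hM.isHermitian.apply i j
  rw [Matrix.det_fin_two] at hdet
  simp only [Matrix.submatrix_apply, Matrix.cons_val_zero, Matrix.cons_val_one, hsymm] at hdet
  linarith

theorem Matrix.not_posDef_of_le_sq_add_sq {n : Type*} [Fintype n] {M : Matrix n n ℝ}
    {i j k l : n} (hik : i ≠ k) (hjl : j ≠ l)
    (h : M i i * M k k + M j j * M l l ≤ M i k ^ 2 + M j l ^ 2) : ¬ M.PosDef := fun hM ↦
  (add_lt_add (hM.sq_lt_mul_diag hik) (hM.sq_lt_mul_diag hjl)).not_ge h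

theorem stmt_16 :
    (∀ x y z : ℝ,
      (!![25*x, 0, -32*x + 12*y, -60*z;
          0, 25*x, 10*z, 24*x + 16*y;
          -32*x + 12*y, 10*z, 6*x + 4*y, 0;
          -60*z, 24*x + 16*y, 0, 6*x + 4*y]).det
        = 4 * (93081*x^4 + 53516*x^3*y - 73684*x^2*y^2 - 31504*x*y^3 + 9216*y^4
            - 369150*x^2*z^2 - 159700*x*y*z^2 + 57600*y^2*z^2 + 90000*z^4)) ∧
    (∀ x y z : ℝ,
      ¬ Matrix.PosDef (!![25*x, 0, -32*x + 12*y, -60*z;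
          0, 25*x, 10*z, 24*x + 16*y;
          -32*x + 12*y, 10*z, 6*x + 4*y, 0;
          -60*z, 24*x + 16*y, 0, 6*x + 4*y]) ∧
      ¬ Matrix.PosDef (-(!![25*x, 0, -32*x + 12*y, -60*z;
          0, 25*x, 10*z, 24*x + 16*y;
          -32*x + 12*y, 10*z, 6*x + 4*y, 0;
          -60*z, 24*x + 16*y, 0, 6*x + 4*y]))) := by
  refine ⟨fun x y z ↦ ?_, fun x y z ↦ ?_⟩
  · simp [Matrix.det_succ_row_zero, Fin.sum_univ_succ, Fin.succAbove]
    ring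
  · have hminors :
        2 * (25 * x * (6 * x + 4 * y)) ≤ (-32 * x + 12 * y) ^ 2 + (24 * x + 16 * y) ^ 2 := by
      nlinarith [sq_nonneg (x - y), sq_nonneg x, sq_nonneg y]
    constructor <;>
    · refine Matrix.not_posDef_of_le_sq_add_sq (i := 0) (k := 2) (j := 1) (l := 3)
        (by decide) (by decide) ?_
      simp only [Matrix.neg_apply, Matrix.of_apply, Matrix.cons_val', Matrix.cons_val_zero,
        Matrix.cons_val_fin_one, Matrix.cons_val, Matrix.cons_val_one]
      linarith
end

section
/- Every principal 4×4 minor of the 8×8 matrix B with B_{ij} given by: B = [[0, z, y, y+z, x, x+z, x+y, x+y+z],[z, 0, y+z, y, x+z, x, x+y+z, x+y],[y, y+z, 0, z, x+y, x+y+z, x, x+z],[y+z, y, z, 0, x+y+z, x+y, x+z, x],[x, x+z, x+y, x+y+z, 0, z, y, y+z],[x+z, x, x+y+z, x+y, z, 0, y+z, y],[x+y, x+y+z, x, x+z, y, y+z, 0, z],[x+y+z, x+y, x+z, x, y+z, y, z, 0]], i.e., the determinant of B restricted to rows and columns indexed by any 4-element subset S ⊆ {1,…,8}, is a scalar multiple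 of the polynomial f(x,y,z) = xyz(x+y+z). -/
def bitangentMatrix (x y z : ℝ) : Matrix (Fin 8) (Fin 8) ℝ :=
  !![0, z, y, y+z, x, x+z, x+y, x+y+z;
     z, 0, y+z, y, x+z, x, x+y+z, x+y;
     y, y+z, 0, z, x+y, x+y+z, x, x+z;
     y+z, y, z, 0, x+y+z, x+y, x+z, x;
     x, x+z, x+y, x+y+z, 0, z, y, y+z;
     x+z, x, x+y+z, x+y, z, 0, y+z, y;
     x+y, x+y+z, x, x+z, y, y+z, 0, z;
     x+y+z, x+y, x+z, x, y+z, y, z, 0]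

/-!
Write `ε_x, ε_y, ε_z : Fin 8 → {±1}` for the signs `(-1)^bit` of the binary digits of an index
(bits 2, 1, 0). Then `B i j = x·[bit₂(i ⊕ j)] + y·[bit₁(i ⊕ j)] + z·[bit₀(i ⊕ j)]`, and
`[bitₖ(i ⊕ j)] = (1 - εₖ i · εₖ j) / 2`, so `B = V D Vᵀ` with `V = (1 | ε_x | ε_y | ε_z)` of size
8×4 and `D = diag (x + y + z, -x, -y, -z) / 2`. A principal 4×4 minor is then
`det (V_S D V_Sᵀ) = det (V_S)² · det D = -det (V_S)² · xyz(x + y + z) / 16`.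
-/

namespace Matrix

theorem det_submatrix_mul_diagonal_mul_transpose {m n R : Type*} [Fintype n] [DecidableEq n]
    [CommRing R] (V : Matrix m n R) (d : n → R) (e : n → m) :
    ((V * diagonal d * Vᵀ).submatrix e e).det = (V.submatrix e id).det ^ 2 * ∏ i, d i := by
  have hid : Function.Bijective (id : n → n) := Function.bijective_id
  rw [submatrix_mul _ _ _ _ _ hid, submatrix_mul _ _ _ _ _ hid, submatrix_id_id,
    ← transpose_submatrix, det_mul, det_mul, det_transpose, det_diagonal]
  ring

end Matrix

open Matrix

def bitangentSignMatrix : Matrix (Fin 8) (Fin 4) ℝ :=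
  !![1,  1,  1,  1;
     1,  1,  1, -1;
     1,  1, -1,  1;
     1,  1, -1, -1;
     1, -1,  1,  1;
     1, -1,  1, -1;
     1, -1, -1,  1;
     1, -1, -1, -1]

theorem bitangentMatrix_eq_mul_diagonal_mul_transpose (x y z : ℝ) :
    bitangentMatrix x y z = bitangentSignMatrix *
      diagonal ![(x + y + z) / 2, -x / 2, -y / 2, -z / 2] * bitangentSignMatrixᵀ := by
  ext i j
  simp only [mul_apply, transpose_apply, Fin.sum_univ_four]
  fin_cases i <;> fin_cases j <;> simp [bitangentMatrix, bitangentSignMatrix] <;> ring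

theorem stmt_17_general (e : Fin 4 → Fin 8) :
    ∃ c : ℝ, ∀ x y z : ℝ,
      ((bitangentMatrix x y z).submatrix e e).det = c * (x * y * z * (x + y + z)) := by
  refine ⟨-(bitangentSignMatrix.submatrix e id).det ^ 2 / 16, fun x y z => ?_⟩
  rw [bitangentMatrix_eq_mul_diagonal_mul_transpose, det_submatrix_mul_diagonal_mul_transpose,
    Fin.prod_univ_four]
  simp only [Fin.isValue, cons_val_zero, cons_val_one, cons_val]
  ring

theorem stmt_17 (e : Fin 4 → Fin 8) (he : Function.Injective e) :
    ∃ c : ℝ, ∀ x y z : ℝ,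
      ((bitangentMatrix x y z).submatrix e e).det = c * (x * y * z * (x + y + z)) :=
  stmt_17_general e
end

section
/- Let f(x,y,z) = x³+y³+z³−m·xyz and fix s, t satisfying t³ − (12m⁴+2592m)t − 16m⁶ + 8640m³ + 93312 = 0 and s = (12m⁴+2592m)t² + (48m⁶−25920m³−279936)t + 48m⁸+20736m⁵+2239488m². Then s·f = Hes(t·f + Hes(f)) as polynomials in x, y, z. -/
/-!
The cubics `a (x³ + y³ + z³) + b xyz` (the Hesse pencil) form a linear family that is stable under
the Hessian: `Hes(a, b) = (-6ab², 216a³ + 2b³)` in these coordinates. Hence both sides of the identity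
lie in the pencil, and it reduces to two scalar identities, which follow from the cubic relation
satisfied by `t` and the definition of `s`.
-/

open MvPolynomial in
/-- The Hessian determinant of a polynomial in three variables. -/
noncomputable def hes (g : MvPolynomial (Fin 3) ℂ) : MvPolynomial (Fin 3) ℂ :=
  (Matrix.of fun i j : Fin 3 => pderiv i (pderiv j g)).det

open MvPolynomial

namespace MvPolynomial

@[simp]
theorem pderiv_ofNat {R σ : Type*} [CommSemiring R] (i : σ) (n : ℕ) [n.AtLeastTwo] :
    pderiv i (no_index (OfNat.ofNat n) : MvPolynomial σ R) = 0 :=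
  (pderiv i).map_natCast n

end MvPolynomial

namespace HessePencil

variable {R : Type*} [CommRing R]

noncomputable def cubic (a b : R) : MvPolynomial (Fin 3) R :=
  C a * (X 0 ^ 3 + X 1 ^ 3 + X 2 ^ 3) + C b * (X 0 * X 1 * X 2)

theorem C_mul_cubic_add_cubic (t a b c d : R) :
    C t * cubic a b + cubic c d = cubic (t * a + c) (t * b + d) := by
  simp only [cubic, map_add, map_mul]
  ring

theorem pderiv_pderiv_cubic (a b : R) :
    Matrix.of (fun i j : Fin 3 => pderiv i (pderiv j (cubic a b))) =
      !![6 * C a * X 0, C b * X 2, C b * X 1;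
         C b * X 2, 6 * C a * X 1, C b * X 0;
         C b * X 1, C b * X 0, 6 * C a * X 2] := by
  refine Matrix.ext fun i j => ?_
  fin_cases i <;> fin_cases j <;>
    simp [cubic, pderiv_X, Pi.single_apply] <;> ring

theorem hes_cubic (a b : ℂ) :
    hes (cubic a b) = cubic (-6 * a * b ^ 2) (216 * a ^ 3 + 2 * b ^ 3) := by
  rw [hes, pderiv_pderiv_cubic, Matrix.det_fin_three]
  simp only [Matrix.of_apply, Matrix.cons_val', Matrix.cons_val_zero, Matrix.cons_val_one,
    Matrix.cons_val, Matrix.cons_val_fin_one, cubic, map_add, map_mul, map_neg, map_pow, map_ofNat]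
  ring

end HessePencil

open HessePencil in
theorem stmt_19 (m s t : ℂ)
    (ht : t^3 - (12*m^4 + 2592*m)*t - 16*m^6 + 8640*m^3 + 93312 = 0)
    (hs : s = (12*m^4 + 2592*m)*t^2 + (48*m^6 - 25920*m^3 - 279936)*t
        + 48*m^8 + 20736*m^5 + 2239488*m^2) :
    C s * (X 0^3 + X 1^3 + X 2^3 - C m * (X 0 * X 1 * X 2) : MvPolynomial (Fin 3) ℂ)
      = hes (C t * (X 0^3 + X 1^3 + X 2^3 - C m * (X 0 * X 1 * X 2))
          + hes (X 0^3 + X 1^3 + X 2^3 - C m * (X 0 * X 1 * X 2))) := by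
  have hf : (X 0^3 + X 1^3 + X 2^3 - C m * (X 0 * X 1 * X 2) : MvPolynomial (Fin 3) ℂ)
      = cubic 1 (-m) := by
    simp only [cubic, map_one, map_neg]
    ring
  have hsf : C s * cubic 1 (-m) = cubic s (-(s * m)) := by
    simp only [cubic, map_one, map_mul, map_neg]
    ring
  rw [hf, hsf, hes_cubic, C_mul_cubic_add_cubic, hes_cubic]
  subst hs
  congr 1
  · linear_combination 6 * m ^ 2 * ht
  · linear_combination (2 * m ^ 3 - 216) * ht
end
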